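/- arXiv:0802.2369 — 2 statements merged into one kernel-verified Lean document; each statement's English description precedes it below -/
import Mathlib

section
/- For each k ∈ ℕ, the function x ↦ √(1-x²) P_k^{(α+1,β+1)}(x) is an eigenfunction of the modified Jacobi operator M^{(α,β)} = J^{(α,β)} + (α+1/2)/(1-x) + (β+1/2)/(1+x) with eigenvalue λ_{k+1} = (k+1)(k + α + β + 2). -/
noncomputable def jacobiP (α β : ℝ) (k : ℕ) (x : ℝ) : ℝ :=
  ((-1 : ℝ) ^ k / (2 ^ k * (Nat.factorial k : ℝ))) * (1 - x) ^ (-α) * (1 + x) ^ (-β) *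
    iteratedDeriv k (fun y => (1 - y) ^ (α + (k : ℝ)) * (1 + y) ^ (β + (k : ℝ))) x

/-! On `(-1, 1)` put `w = (1 - x)^a (1 + x)^b` with `a = α + 1 + k`, `b = β + 1 + k`.
It solves `(1 - x²) w' + ((a + b) x + a - b) w = 0`, and differentiating this `k + 1` times gives
a second-order equation for `v = w⁽ᵏ⁾`. By Rodrigues' formula `√(1 - x²) P_k^{(α+1,β+1)}` is a
constant multiple of `φ v` with `φ = (1 - x)^(-α-1/2) (1 + x)^(-β-1/2)`; expanding `(φ v)'` and
`(φ v)''` through the logarithmic derivative of `φ`, the equation for `v` becomes the eigenvalue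
equation of the modified Jacobi operator. -/

open Set Filter Topology
open scoped ContDiff

theorem hasDerivAt_iteratedDeriv_of_contDiffOn {𝕜 F : Type*} [NontriviallyNormedField 𝕜]
    [NormedAddCommGroup F] [NormedSpace 𝕜 F] {f : 𝕜 → F} {s : Set 𝕜} (hs : IsOpen s)
    (hf : ContDiffOn 𝕜 ∞ f s) (n : ℕ) {y : 𝕜} (hy : y ∈ s) :
    HasDerivAt (iteratedDeriv n f) (iteratedDeriv (n + 1) f y) y := by
  have hd : DifferentiableOn 𝕜 (iteratedDeriv n f) s :=
    (hf.differentiableOn_iteratedDerivWithin (by exact_mod_cast ENat.natCast_lt_top n)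
      hs.uniqueDiffOn).congr fun z hz => (iteratedDerivWithin_of_isOpen hs hz).symm
  rw [iteratedDeriv_succ]
  exact ((hd y hy).differentiableAt (hs.mem_nhds hy)).hasDerivAt

noncomputable def jacobiWeight (a b y : ℝ) : ℝ := (1 - y) ^ a * (1 + y) ^ b

theorem contDiffOn_jacobiWeight (a b : ℝ) : ContDiffOn ℝ ∞ (jacobiWeight a b) (Ioo (-1) 1) :=
  ((contDiffOn_const.sub contDiffOn_id).rpow_const_of_ne fun _ hy => by
    simp only [id]; linarith [hy.2]).mul
  ((contDiffOn_const.add contDiffOn_id).rpow_const_of_ne fun _ hy => by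
    simp only [id]; linarith [hy.1])

theorem hasDerivAt_jacobiWeight_mul (a b : ℝ) {v : ℝ → ℝ} {v' y : ℝ} (hv : HasDerivAt v v' y)
    (hy : y ∈ Ioo (-1 : ℝ) 1) :
    HasDerivAt (fun z => jacobiWeight a b z * v z)
      (jacobiWeight a b y * (v' + (b / (1 + y) - a / (1 - y)) * v y)) y := by
  have h₁ : 1 - y ≠ 0 := by linarith [hy.2]
  have h₂ : 1 + y ≠ 0 := by linarith [hy.1]
  have hA := ((hasDerivAt_id y).const_sub 1).rpow_const (p := a) (Or.inl h₁)
  have hB := ((hasDerivAt_id y).const_add 1).rpow_const (p := b) (Or.inl h₂)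
  refine ((hA.mul hB).mul hv).congr_deriv ?_
  simp only [jacobiWeight, id, Pi.mul_apply]
  rw [Real.rpow_sub_one h₁, Real.rpow_sub_one h₂]
  field_simp
  ring

theorem jacobiWeight_ode (a b : ℝ) {y : ℝ} (hy : y ∈ Ioo (-1 : ℝ) 1) :
    (1 - y ^ 2) * deriv (jacobiWeight a b) y + ((a + b) * y + (a - b)) * jacobiWeight a b y = 0 := by
  have h₁ : 1 - y ≠ 0 := by linarith [hy.2]
  have h₂ : 1 + y ≠ 0 := by linarith [hy.1]
  have hw := hasDerivAt_jacobiWeight_mul a b (hasDerivAt_const y 1) hy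
  simp only [mul_one] at hw
  rw [hw.deriv]
  field_simp
  ring

theorem iteratedDeriv_ode_succ {u : ℝ → ℝ} (hu : ContDiffOn ℝ ∞ u (Ioo (-1) 1)) (m j : ℕ)
    (p q r : ℝ)
    (h : ∀ y ∈ Ioo (-1 : ℝ) 1, (1 - y ^ 2) * iteratedDeriv (m + 1) u y
      + (p * y + q) * iteratedDeriv m u y + r * iteratedDeriv j u y = 0)
    {y : ℝ} (hy : y ∈ Ioo (-1 : ℝ) 1) :
    (1 - y ^ 2) * iteratedDeriv (m + 2) u y + ((p - 2) * y + q) * iteratedDeriv (m + 1) u y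
      + p * iteratedDeriv m u y + r * iteratedDeriv (j + 1) u y = 0 := by
  have hD n := hasDerivAt_iteratedDeriv_of_contDiffOn isOpen_Ioo hu n hy
  have hsq : HasDerivAt (fun z : ℝ => 1 - z ^ 2) (-(2 * y)) y := by
    simpa using (hasDerivAt_pow 2 y).const_sub 1
  have hlin : HasDerivAt (fun z : ℝ => p * z + q) p y := by
    simpa using ((hasDerivAt_id y).const_mul p).add_const q
  have hzero : (fun z => (1 - z ^ 2) * iteratedDeriv (m + 1) u z
      + (p * z + q) * iteratedDeriv m u z + r * iteratedDeriv j u z) =ᶠ[𝓝 y] fun _ => 0 :=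
    eventually_of_mem (isOpen_Ioo.mem_nhds hy) h
  have := (((hsq.mul (hD (m + 1))).add (hlin.mul (hD m))).add ((hD j).const_mul r)).unique
    ((hasDerivAt_const y 0).congr_of_eventuallyEq hzero)
  linear_combination this

theorem iteratedDeriv_jacobiWeight_ode (a b : ℝ) (n : ℕ) {y : ℝ} (hy : y ∈ Ioo (-1 : ℝ) 1) :
    (1 - y ^ 2) * iteratedDeriv (n + 2) (jacobiWeight a b) y
      + ((a + b - 2 * (n + 1)) * y + (a - b)) * iteratedDeriv (n + 1) (jacobiWeight a b) y
      + ((n + 1) * (a + b - n)) * iteratedDeriv n (jacobiWeight a b) y = 0 := by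
  induction n generalizing y with
  | zero =>
    have := iteratedDeriv_ode_succ (contDiffOn_jacobiWeight a b) 0 0 (a + b) (a - b) 0
      (fun z hz => by simpa using jacobiWeight_ode a b hz) hy
    push_cast
    linear_combination this
  | succ n ih =>
    have := iteratedDeriv_ode_succ (contDiffOn_jacobiWeight a b) (n + 1) n
      (a + b - 2 * (n + 1)) (a - b) ((n + 1) * (a + b - n)) (fun z hz => ih hz) hy
    push_cast
    linear_combination this

theorem deriv_jacobiWeight_mul (p q : ℝ) {v v' : ℝ → ℝ} {v'' x : ℝ}
    (hv : ∀ y ∈ Ioo (-1 : ℝ) 1, HasDerivAt v (v' y) y) (hv' : HasDerivAt v' v'' x)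
    (hx : x ∈ Ioo (-1 : ℝ) 1) :
    deriv (fun y => jacobiWeight p q y * v y) x
        = jacobiWeight p q x * (v' x + (q / (1 + x) - p / (1 - x)) * v x) ∧
      deriv (deriv fun y => jacobiWeight p q y * v y) x
        = jacobiWeight p q x * (v'' + 2 * (q / (1 + x) - p / (1 - x)) * v' x
          + ((q / (1 + x) - p / (1 - x)) ^ 2 - q / (1 + x) ^ 2 - p / (1 - x) ^ 2) * v x) := by
  have h₁ : 1 - x ≠ 0 := by linarith [hx.2]
  have h₂ : 1 + x ≠ 0 := by linarith [hx.1]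
  have hderiv : deriv (fun y => jacobiWeight p q y * v y) =ᶠ[𝓝 x]
      fun y => jacobiWeight p q y * (v' y + (q / (1 + y) - p / (1 - y)) * v y) :=
    eventually_of_mem (isOpen_Ioo.mem_nhds hx) fun y hy =>
      (hasDerivAt_jacobiWeight_mul p q (hv y hy) hy).deriv
  have hlog : HasDerivAt (fun y => q / (1 + y) - p / (1 - y))
      (-q / (1 + x) ^ 2 - p / (1 - x) ^ 2) x := by
    refine (((hasDerivAt_const x q).div ((hasDerivAt_id x).const_add 1) h₂).sub
      ((hasDerivAt_const x p).div ((hasDerivAt_id x).const_sub 1) h₁)).congr_deriv ?_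
    simp only [id]
    field_simp
    ring
  refine ⟨hderiv.eq_of_nhds, ?_⟩
  rw [hderiv.deriv_eq]
  exact (hasDerivAt_jacobiWeight_mul p q (hv'.add (hlog.mul (hv x hx))) hx).deriv.trans
    (by simp only [Pi.add_apply, Pi.mul_apply]; ring)

theorem sqrt_mul_jacobiP_eq (a b : ℝ) (k : ℕ) {y : ℝ} (hy : y ∈ Ioo (-1 : ℝ) 1) :
    √(1 - y ^ 2) * jacobiP a b k y = jacobiWeight (1 / 2 - a) (1 / 2 - b) y
      * ((-1) ^ k / (2 ^ k * k.factorial) * iteratedDeriv k (jacobiWeight (a + k) (b + k)) y) := by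
  have h₁ : 0 < 1 - y := by linarith [hy.2]
  have h₂ : 0 < 1 + y := by linarith [hy.1]
  have hsqrt : √(1 - y ^ 2) = (1 - y) ^ (1 / 2 : ℝ) * (1 + y) ^ (1 / 2 : ℝ) := by
    rw [show 1 - y ^ 2 = (1 - y) * (1 + y) by ring, Real.sqrt_mul h₁.le, Real.sqrt_eq_rpow,
      Real.sqrt_eq_rpow]
  have hweight : jacobiWeight (a + k) (b + k) = fun z => (1 - z) ^ (a + k) * (1 + z) ^ (b + k) :=
    rfl
  rw [hsqrt, jacobiP, hweight, jacobiWeight, sub_eq_add_neg (1 / 2 : ℝ) a,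
    sub_eq_add_neg (1 / 2 : ℝ) b, Real.rpow_add h₁, Real.rpow_add h₂]
  ring

theorem modified_jacobi_eigenfunction_general (α β : ℝ) (k : ℕ)
    (x : ℝ) (hx : x ∈ Set.Ioo (-1 : ℝ) 1) :
    (-(1 - x ^ 2) * deriv (deriv (fun y => Real.sqrt (1 - y ^ 2) * jacobiP (α + 1) (β + 1) k y)) x
      - (β - α - (α + β + 2) * x) *
          deriv (fun y => Real.sqrt (1 - y ^ 2) * jacobiP (α + 1) (β + 1) k y) x)
      + ((α + 1 / 2) / (1 - x) + (β + 1 / 2) / (1 + x)) *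
          (Real.sqrt (1 - x ^ 2) * jacobiP (α + 1) (β + 1) k x) =
      ((k : ℝ) + 1) * ((k : ℝ) + α + β + 2) * (Real.sqrt (1 - x ^ 2) * jacobiP (α + 1) (β + 1) k x) := by
  have h₁ : 1 - x ≠ 0 := by linarith [hx.2]
  have h₂ : 1 + x ≠ 0 := by linarith [hx.1]
  have hode := iteratedDeriv_jacobiWeight_ode (α + 1 + k) (β + 1 + k) k hx
  set w := jacobiWeight (α + 1 + k) (β + 1 + k)
  set c : ℝ := (-1) ^ k / (2 ^ k * k.factorial)
  have hD (n : ℕ) {y : ℝ} (hy : y ∈ Ioo (-1 : ℝ) 1) :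
      HasDerivAt (fun y => c * iteratedDeriv n w y) (c * iteratedDeriv (n + 1) w y) y :=
    (hasDerivAt_iteratedDeriv_of_contDiffOn isOpen_Ioo (contDiffOn_jacobiWeight _ _) n hy).const_mul
      c
  have hf : (fun y => √(1 - y ^ 2) * jacobiP (α + 1) (β + 1) k y) =ᶠ[𝓝 x]
      fun y => jacobiWeight (1 / 2 - (α + 1)) (1 / 2 - (β + 1)) y * (c * iteratedDeriv k w y) :=
    eventually_of_mem (isOpen_Ioo.mem_nhds hx) fun y hy => sqrt_mul_jacobiP_eq _ _ k hy
  obtain ⟨hf', hf''⟩ := deriv_jacobiWeight_mul _ _ (fun y hy => hD k hy) (hD (k + 1) hx) hx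
  rw [hf.deriv.deriv_eq, hf.deriv_eq, hf.eq_of_nhds, hf', hf'']
  clear_value c -- otherwise `field_simp` unfolds `c`
  generalize jacobiWeight (1 / 2 - (α + 1)) (1 / 2 - (β + 1)) x = W
  field_simp
  linear_combination (-4 * W * c * (1 + x) ^ 2 * (1 - x) ^ 2) * hode

theorem modified_jacobi_eigenfunction (α β : ℝ) (hα : -1 < α) (hβ : -1 < β) (k : ℕ)
    (x : ℝ) (hx : x ∈ Set.Ioo (-1 : ℝ) 1) :
    (-(1 - x ^ 2) * deriv (deriv (fun y => Real.sqrt (1 - y ^ 2) * jacobiP (α + 1) (β + 1) k y)) x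
      - (β - α - (α + β + 2) * x) *
          deriv (fun y => Real.sqrt (1 - y ^ 2) * jacobiP (α + 1) (β + 1) k y) x)
      + ((α + 1 / 2) / (1 - x) + (β + 1 / 2) / (1 + x)) *
          (Real.sqrt (1 - x ^ 2) * jacobiP (α + 1) (β + 1) k x) =
      ((k : ℝ) + 1) * ((k : ℝ) + α + β + 2) * (Real.sqrt (1 - x ^ 2) * jacobiP (α + 1) (β + 1) k x) :=
  modified_jacobi_eigenfunction_general α β k x hx
end

section
/- For t > 0 and γ ≥ 0, the subordination identity e^{-tγ} = (1/√π) ∫₀^∞ (e^{-u}/√u) e^{-γ² t²/(4u)} du holds. -/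
/-!
Substituting `u = x ^ 2` turns the integral into `2 ∫₀^∞ exp (-x ^ 2 - b ^ 2 / (4 x ^ 2)) dx`
with `b = t γ`, and completing the square gives `2 e^{-b} ∫₀^∞ exp (-(x - c / x) ^ 2) dx` with
`c = b / 2`. The last integral is `√π / 2` for every `c ≥ 0` by the Cauchy–Schlömilch
substitution: for even `f`, the involution `x ↦ c / x` of `(0, ∞)` shows that
`∫₀^∞ f (x - c / x) dx = ∫₀^∞ (c / x ^ 2) f (x - c / x) dx`, and adding the two sides gives
`∫₀^∞ (1 + c / x ^ 2) f (x - c / x) dx = ∫_ℝ f`, since `x ↦ x - c / x` maps `(0, ∞)`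
increasingly onto `ℝ`.
-/

open MeasureTheory Real Set

section ChangeOfVariables

variable {E : Type*} [NormedAddCommGroup E] [NormedSpace ℝ E] {c : ℝ}

theorem hasDerivAt_sub_div {x : ℝ} (hx : x ≠ 0) :
    HasDerivAt (fun x : ℝ => x - c / x) (1 + c / x ^ 2) x := by
  refine ((hasDerivAt_id' x).sub ((hasDerivAt_const x c).div (hasDerivAt_id' x) hx)).congr_deriv ?_
  ring

theorem strictMonoOn_sub_div (hc : 0 ≤ c) : StrictMonoOn (fun x : ℝ => x - c / x) (Ioi 0) := by
  intro a ha b _ hab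
  have : c / b ≤ c / a := div_le_div_of_nonneg_left hc ha hab.le
  dsimp only
  linarith

theorem image_sub_div_Ioi (hc : 0 < c) : (fun x : ℝ => x - c / x) '' Ioi 0 = univ := by
  refine eq_univ_of_forall fun y => ?_
  -- the positive root of `x ^ 2 - y * x - c`
  set s := √(y ^ 2 + 4 * c)
  have hs : s ^ 2 = y ^ 2 + 4 * c := sq_sqrt (by positivity)
  have hys : -y < s := by nlinarith [sqrt_nonneg (y ^ 2 + 4 * c), abs_nonneg y, sq_abs y]
  have hx : 0 < (y + s) / 2 := by linarith
  refine ⟨(y + s) / 2, hx, ?_⟩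
  have : c / ((y + s) / 2) = (y + s) / 2 - y := by
    rw [div_eq_iff hx.ne']
    nlinarith
  dsimp only
  rw [this]
  ring

theorem integral_comp_div_Ioi (g : ℝ → E) (hc : 0 < c) :
    ∫ x in Ioi 0, (c / x ^ 2) • g (c / x) = ∫ x in Ioi 0, g x := by
  have himage : (fun x : ℝ => c / x) '' Ioi 0 = Ioi 0 := by
    refine Subset.antisymm (image_subset_iff.2 fun x hx => div_pos hc hx) fun y hy => ?_
    exact ⟨c / y, div_pos hc hy, div_div_cancel₀ hc.ne'⟩
  have hderiv : ∀ x ∈ Ioi (0 : ℝ), HasDerivWithinAt (fun x => c / x) (-(c / x ^ 2)) (Ioi 0) x := by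
    intro x hx
    refine ((hasDerivAt_const x c).div (hasDerivAt_id' x) hx.ne').hasDerivWithinAt.congr_deriv ?_
    ring
  have hinj : InjOn (fun x : ℝ => c / x) (Ioi 0) := fun a _ b _ hab =>
    inv_injective (mul_left_cancel₀ hc.ne' (by simpa [div_eq_mul_inv] using hab))
  conv_rhs => rw [← himage, integral_image_eq_integral_abs_deriv_smul measurableSet_Ioi hderiv hinj]
  refine setIntegral_congr_fun measurableSet_Ioi fun x hx => ?_
  have : 0 < c / x ^ 2 := div_pos hc (pow_pos hx 2)
  rw [abs_neg, abs_of_pos this]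

theorem integral_Ioi_comp_sq (g : ℝ → E) :
    ∫ x in Ioi 0, (2 * x) • g (x ^ 2) = ∫ u in Ioi 0, g u := by
  conv_rhs => rw [← integral_comp_rpow_Ioi_of_pos two_pos]
  refine setIntegral_congr_fun measurableSet_Ioi fun x _ => ?_
  norm_num

theorem integral_Ioi_comp_sub_div (hc : 0 < c) {f : ℝ → E} (hf : Integrable f)
    (heven : ∀ y, f (-y) = f y) :
    ∫ x in Ioi 0, f (x - c / x) = (2 : ℝ)⁻¹ • ∫ y, f y := by
  have hderiv : ∀ x ∈ Ioi (0 : ℝ),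
      HasDerivWithinAt (fun x => x - c / x) (1 + c / x ^ 2) (Ioi 0) x :=
    fun x hx => (hasDerivAt_sub_div (ne_of_gt hx)).hasDerivWithinAt
  have hinj := (strictMonoOn_sub_div hc.le).injOn
  have habs : ∀ x ∈ Ioi (0 : ℝ), |1 + c / x ^ 2| = 1 + c / x ^ 2 := fun x hx =>
    abs_of_pos (by positivity)
  set h : ℝ → E := fun x => (1 + c / x ^ 2) • f (x - c / x)
  have hh : IntegrableOn h (Ioi 0) := by
    have := (integrableOn_image_iff_integrableOn_abs_deriv_smul measurableSet_Ioi hderiv hinj f).1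
      (by rw [image_sub_div_Ioi hc]; exact hf.integrableOn)
    exact this.congr_fun (fun x hx => by simp only [habs x hx, h]) measurableSet_Ioi
  have hfh : ∫ y, f y = ∫ x in Ioi 0, h x := by
    conv_lhs => rw [← setIntegral_univ, ← image_sub_div_Ioi hc,
      integral_image_eq_integral_abs_deriv_smul measurableSet_Ioi hderiv hinj]
    exact setIntegral_congr_fun measurableSet_Ioi fun x hx => by simp only [habs x hx, h]
  -- `f ∘ (x ↦ x - c / x)` is `h` times the bounded factor `(1 + c / x ^ 2)⁻¹`
  have hcomp : IntegrableOn (fun x => f (x - c / x)) (Ioi 0) := by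
    refine IntegrableOn.congr_fun (hh.bdd_smul 1 (φ := fun x => (1 + c / x ^ 2)⁻¹) ?_ ?_) ?_
      measurableSet_Ioi
    · exact (by fun_prop : Measurable fun x : ℝ => (1 + c / x ^ 2)⁻¹).aestronglyMeasurable
    · refine Filter.Eventually.of_forall fun x => ?_
      have : 1 ≤ 1 + c / x ^ 2 := le_add_of_nonneg_right (by positivity)
      rw [norm_inv, norm_of_nonneg (by positivity)]
      exact inv_le_one_of_one_le₀ this
    · intro x hx
      simp only [h, Pi.smul_apply', smul_smul]
      rw [inv_mul_cancel₀ (by positivity), one_smul]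
  have hcomp' : IntegrableOn (fun x => (c / x ^ 2) • f (x - c / x)) (Ioi 0) :=
    (hh.sub hcomp).congr_fun
      (fun x _ => by simp only [h, Pi.sub_apply, add_smul, one_smul, add_sub_cancel_left])
      measurableSet_Ioi
  have hsym : ∫ x in Ioi 0, (c / x ^ 2) • f (x - c / x) = ∫ x in Ioi 0, f (x - c / x) := by
    conv_rhs => rw [← integral_comp_div_Ioi _ hc]
    refine setIntegral_congr_fun measurableSet_Ioi fun x hx => ?_
    rw [div_div_cancel₀ hc.ne', ← heven, neg_sub]
  have hsplit : ∫ x in Ioi 0, h x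
      = (∫ x in Ioi 0, f (x - c / x)) + ∫ x in Ioi 0, (c / x ^ 2) • f (x - c / x) := by
    rw [← integral_add hcomp hcomp']
    simp only [h, add_smul, one_smul]
  rw [hfh, hsplit, hsym, ← two_smul ℝ, smul_smul]
  norm_num

end ChangeOfVariables

theorem integral_Ioi_exp_neg_sq_sub_div {c : ℝ} (hc : 0 ≤ c) :
    ∫ x in Ioi 0, exp (-(x - c / x) ^ 2) = √π / 2 := by
  rcases hc.eq_or_lt with rfl | hc
  · simpa using integral_gaussian_Ioi 1
  · rw [integral_Ioi_comp_sub_div hc (f := fun y => exp (-y ^ 2))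
      (by simpa using integrable_exp_neg_mul_sq one_pos) (fun y => by simp)]
    simpa [div_eq_inv_mul] using integral_gaussian 1

theorem exp_neg_sq_mul_exp_neg_div_sq (b : ℝ) {x : ℝ} (hx : x ≠ 0) :
    exp (-x ^ 2) * exp (-b ^ 2 / (4 * x ^ 2)) = exp (-b) * exp (-(x - b / 2 / x) ^ 2) := by
  rw [← exp_add, ← exp_add]
  congr 1
  field_simp
  ring

theorem subordination_identity (t γ : ℝ) (ht : 0 < t) (hγ : 0 ≤ γ) :
    Real.exp (-t * γ) =
      (1 / Real.sqrt Real.pi) *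
        ∫ u in Set.Ioi (0 : ℝ),
          (Real.exp (-u) / Real.sqrt u) * Real.exp (-γ ^ 2 * t ^ 2 / (4 * u)) := by
  have hu : ∫ u in Ioi (0 : ℝ), (exp (-u) / √u) * exp (-γ ^ 2 * t ^ 2 / (4 * u))
      = ∫ x in Ioi (0 : ℝ), 2 * exp (-(t * γ)) * exp (-(x - t * γ / 2 / x) ^ 2) := by
    rw [← integral_Ioi_comp_sq]
    refine setIntegral_congr_fun measurableSet_Ioi fun x (hx : 0 < x) => ?_
    rw [sqrt_sq hx.le, smul_eq_mul, mul_assoc 2 (exp _), ← exp_neg_sq_mul_exp_neg_div_sq _ hx.ne',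
      mul_pow, mul_comm (t ^ 2)]
    field_simp
  rw [hu, integral_const_mul, integral_Ioi_exp_neg_sq_sub_div (by positivity)]
  field_simp
end
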